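/- arXiv:1702.02375 — 2 statements merged into one kernel-verified Lean document; each statement's English description precedes it below -/
import Mathlib

section
/- Let B be an infinite primitive set of positive integers and suppose the window W is topologically regular, i.e., W equals the closure of its interior in H. Then the subshift (X_η, σ) is minimal (the orbit closure of every point of X_η equals X_η) and X_η has more than one element. -/
open Set MeasureTheory Filter Topology

namespace BFree

/-- The ambient compact group `∏_{b ∈ B} ℤ/bℤ`. -/
abbrev Gspace (B : Set ℕ+) : Type := ∀ b : B, ZMod ((b : ℕ+) : ℕ)

/-- The diagonal embedding `Δ : ℤ → ∏_{b ∈ B} ℤ/bℤ`. -/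
def delta (B : Set ℕ+) : ℤ →+ Gspace B where
  toFun n := fun b => (n : ZMod ((b : ℕ+) : ℕ))
  map_zero' := by funext b; simp
  map_add' m n := by funext b; simp

/-- `H`, the closure of `Δ(ℤ)`, as a (closed) subgroup of `Gspace B`. -/
def Hgrp (B : Set ℕ+) : AddSubgroup (Gspace B) :=
  (delta B).range.topologicalClosure

/-- `H` as a compact topological group. -/
abbrev Hspace (B : Set ℕ+) : Type := ↥(Hgrp B)

instance (B : Set ℕ+) : CompactSpace (Hspace B) :=
  isCompact_iff_compactSpace.mp
    (IsClosed.isCompact (AddSubgroup.isClosed_topologicalClosure _))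

instance (B : Set ℕ+) : BorelSpace (Hspace B) := Subtype.borelSpace _

/-- The window `W = {h ∈ H : h_b ≠ 0 for all b ∈ B}`. -/
def window (B : Set ℕ+) : Set (Hspace B) :=
  {h | ∀ b : B, (h : Gspace B) b ≠ 0}

/-- `Δ(n)` as an element of `H`. -/
def deltaH (B : Set ℕ+) (n : ℤ) : Hspace B :=
  ⟨delta B n, (delta B).range.le_topologicalClosure ⟨n, rfl⟩⟩

/-- The set of multiples `M_B ⊆ ℤ` of a set `B` of positive integers. -/
def MultSet (B : Set ℕ+) : Set ℤ := {n | ∃ b ∈ B, ((b : ℕ) : ℤ) ∣ n}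

/-- The `B`-free set `F_B = ℤ ∖ M_B`. -/
def FreeSet (B : Set ℕ+) : Set ℤ := {n | ∀ b ∈ B, ¬ ((b : ℕ) : ℤ) ∣ n}

/-- Set of multiples of a set of natural numbers. -/
def MultSetN (C : Set ℕ) : Set ℤ := {n | ∃ c ∈ C, (c : ℤ) ∣ n}

/-- Free set of a set of natural numbers. -/
def FreeSetN (C : Set ℕ) : Set ℤ := {n | ∀ c ∈ C, ¬ (c : ℤ) ∣ n}

/-- `#(M ∩ [1, N]) / N`. -/
noncomputable def densSeq (M : Set ℤ) (N : ℕ) : ℝ :=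
  (Nat.card ↥(M ∩ Set.Icc (1 : ℤ) (N : ℤ)) : ℝ) / N

/-- Lower (asymptotic) density of a set of integers. -/
noncomputable def lowerDensity (M : Set ℤ) : ℝ := Filter.liminf (densSeq M) Filter.atTop

/-- Upper (asymptotic) density of a set of integers. -/
noncomputable def upperDensity (M : Set ℤ) : ℝ := Filter.limsup (densSeq M) Filter.atTop

/-- `B` is taut if removing any element strictly decreases the lower density
of the set of multiples. -/
def Taut (B : Set ℕ+) : Prop :=
  ∀ b ∈ B, lowerDensity (MultSet (B \ {b})) < lowerDensity (MultSet B)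

/-- `B` is primitive if no element divides another. -/
def Primitive (B : Set ℕ+) : Prop :=
  ∀ b ∈ B, ∀ b' ∈ B, (b : ℕ) ∣ (b' : ℕ) → b = b'

/-- `lcm(S)` for a finite set of positive integers. -/
def lcmS (S : Finset ℕ+) : ℕ := S.lcm fun b => (b : ℕ)

/-- `A_S = {gcd(b, lcm S) : b ∈ B}`. -/
def ASet (B : Set ℕ+) (S : Finset ℕ+) : Set ℕ :=
  {m | ∃ b ∈ B, m = Nat.gcd (b : ℕ) (lcmS S)}

/-- The cylinder set `U_S(h) ⊆ H`. -/
def cyl (B : Set ℕ+) (S : Finset ℕ+) (hS : ↑S ⊆ B) (h : Hspace B) : Set (Hspace B) :=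
  {h' | ∀ b, ∀ hb : b ∈ S, (h' : Gspace B) ⟨b, hS hb⟩ = (h : Gspace B) ⟨b, hS hb⟩}

/-- `E = ⋃_{S ⊆ B finite} F_{A_S}`. -/
def Eset (B : Set ℕ+) : Set ℤ :=
  ⋃ (S : Finset ℕ+) (_ : ↑S ⊆ B), FreeSetN (ASet B S)

/-- `A_∞`. -/
def Ainfty (B : Set ℕ+) : Set ℕ :=
  {n | ∀ S : Finset ℕ+, ↑S ⊆ B →
    ∃ S' : Finset ℕ+, S ⊆ S' ∧ ↑S' ⊆ B ∧ n ∈ ASet B S' ∧ ∀ b ∈ S', (b : ℕ) ≠ n}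

/-- The indicator `η` of the `B`-free set, as a point of `{0,1}^ℤ`. -/
noncomputable def eta (B : Set ℕ+) : ℤ → Bool :=
  fun n => @decide (n ∈ FreeSet B) (Classical.propDecidable _)

/-- The left shift on `{0,1}^ℤ`, iterated `k` times (`k ∈ ℤ`). -/
def shift (k : ℤ) (x : ℤ → Bool) : ℤ → Bool := fun n => x (n + k)

/-- The orbit closure `X_η` of `η` in `{0,1}^ℤ`. -/
noncomputable def Xeta (B : Set ℕ+) : Set (ℤ → Bool) :=
  closure {x | ∃ k : ℤ, x = shift k (eta B)}

/-!
`η` is a Toeplitz sequence (every position is periodic), and the orbit closure of a Toeplitz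
sequence is minimal. A position in `M_B` has as period any `b ∈ B` dividing it. For `n ∈ F_B`,
regularity of `W` gives interior points of `W` arbitrarily close to `Δ(n)`; a cylinder around such
a point lies in `W`, so by density of `Δ(ℤ)` a whole progression `m + Lℤ` lies in `F_B`, with
`m ≡ n` modulo the lcm of any prescribed finite `S₀ ⊆ B`. Choosing `S₀` so that its lcm
absorbs every divisor of `n` that divides an lcm of finitely many elements of `B` makes
`gcd(b, L) ∣ n` imply `gcd(b, L) ∣ m`, and Bézout transfers `B`-freeness from `m + Lℤ` to
`n + Lℤ`. Finally `η(0) = 0`, while primitivity gives `η(1) = 1`.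
-/

section Shift

lemma shift_shift (k j : ℤ) (x : ℤ → Bool) : shift k (shift j x) = shift (j + k) x := by
  funext n
  simp only [shift, add_assoc, add_comm j k]

lemma continuous_shift (k : ℤ) : Continuous (shift k) :=
  continuous_pi fun n => continuous_apply (n + k)

def shiftOrbit (x : ℤ → Bool) : Set (ℤ → Bool) := {y | ∃ k : ℤ, y = shift k x}

lemma shift_mem_closure_shiftOrbit {x z : ℤ → Bool} (k : ℤ)
    (hz : z ∈ closure (shiftOrbit x)) : shift k z ∈ closure (shiftOrbit x) :=
  map_mem_closure (continuous_shift k) hz fun _ ⟨j, hj⟩ => ⟨j + k, by rw [hj, shift_shift]⟩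

lemma closure_shiftOrbit_subset {x z : ℤ → Bool} (hz : z ∈ closure (shiftOrbit x)) :
    closure (shiftOrbit z) ⊆ closure (shiftOrbit x) :=
  closure_minimal (fun _ ⟨k, hk⟩ => hk ▸ shift_mem_closure_shiftOrbit k hz) isClosed_closure

lemma mem_closure_iff_forall_finset {S : Set (ℤ → Bool)} {x : ℤ → Bool} :
    x ∈ closure S ↔ ∀ F : Finset ℤ, ∃ y ∈ S, ∀ i ∈ F, y i = x i := by
  constructor
  · intro hx F
    obtain ⟨y, hyF, hyS⟩ := mem_closure_iff.mp hx _
      (isOpen_set_pi F.finite_toSet fun _ _ => isOpen_discrete _) (fun i _ => rfl)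
    exact ⟨y, hyS, fun i hi => (hyF i hi).symm⟩
  · refine fun h => mem_closure_iff.mpr fun o ho hxo => ?_
    obtain ⟨I, u, hIu, hsub⟩ := isOpen_pi_iff.mp ho x hxo
    obtain ⟨y, hyS, hy⟩ := h I
    exact ⟨y, hsub fun i hi => (hy i hi).symm ▸ (hIu i hi).2, hyS⟩

def IsToeplitz (x : ℤ → Bool) : Prop :=
  ∀ n : ℤ, ∃ p : ℤ, 0 < p ∧ ∀ k : ℤ, x (n + k * p) = x n

namespace IsToeplitz

variable {x : ℤ → Bool}

lemma exists_common_period (hx : IsToeplitz x) (F : Finset ℤ) :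
    ∃ P : ℤ, 0 < P ∧ ∀ i ∈ F, ∀ k : ℤ, x (i + k * P) = x i := by
  choose p hp_pos hp using hx
  refine ⟨∏ i ∈ F, p i, Finset.prod_pos fun i _ => hp_pos i, fun i hi k => ?_⟩
  obtain ⟨c, hc⟩ := Finset.dvd_prod_of_mem p hi
  rw [hc, show k * (p i * c) = k * c * p i by ring]
  exact hp i (k * c)

lemma mem_closure_shiftOrbit (hx : IsToeplitz x) {y : ℤ → Bool}
    (hy : y ∈ closure (shiftOrbit x)) : x ∈ closure (shiftOrbit y) := by
  refine mem_closure_iff_forall_finset.mpr fun F => ?_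
  obtain ⟨P, hP_pos, hP⟩ := hx.exists_common_period F
  obtain ⟨-, ⟨k, rfl⟩, hk⟩ := mem_closure_iff_forall_finset.mp hy
    (F.biUnion fun i => Finset.Ioc (i - P) i)
  -- `k - k % P` is a multiple of the common period of the positions in `F`.
  refine ⟨shift (-(k % P)) y, ⟨_, rfl⟩, fun i hi => ?_⟩
  have h_mod_nonneg := Int.emod_nonneg k hP_pos.ne'
  have h_mod_lt := Int.emod_lt_of_pos k hP_pos
  have h_div := Int.mul_ediv_add_emod k P
  have hmem : i + -(k % P) ∈ F.biUnion fun i => Finset.Ioc (i - P) i :=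
    Finset.mem_biUnion.mpr ⟨i, hi, Finset.mem_Ioc.mpr ⟨by omega, by omega⟩⟩
  calc shift (-(k % P)) y i = x (i + -(k % P) + k) := (hk _ hmem).symm
    _ = x (i + k / P * P) := by congr 1; linarith
    _ = x i := hP i hi _

lemma closure_shiftOrbit_eq (hx : IsToeplitz x) {y : ℤ → Bool}
    (hy : y ∈ closure (shiftOrbit x)) : closure (shiftOrbit y) = closure (shiftOrbit x) :=
  (closure_shiftOrbit_subset hy).antisymm (closure_shiftOrbit_subset (hx.mem_closure_shiftOrbit hy))

end IsToeplitz

end Shift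

section Cylinder

variable {B : Set ℕ+}

lemma mem_cyl_self (S : Finset ℕ+) (hS : ↑S ⊆ B) (h : Hspace B) : h ∈ cyl B S hS h :=
  fun _ _ => rfl

lemma isOpen_cyl (S : Finset ℕ+) (hS : ↑S ⊆ B) (h : Hspace B) : IsOpen (cyl B S hS h) := by
  let restrict : Hspace B → ∀ b : S, ZMod ((b : ℕ+) : ℕ) :=
    fun h' b => (h' : Gspace B) ⟨b, hS b.2⟩
  have h_eq : cyl B S hS h = restrict ⁻¹' {restrict h} := by
    ext h'
    simp only [cyl, mem_ofPred_eq, mem_preimage, mem_singleton_iff, funext_iff, restrict]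
    exact ⟨fun H b => H b b.2, fun H b hb => H ⟨b, hb⟩⟩
  rw [h_eq]
  exact (isOpen_discrete _).preimage
    (continuous_pi fun b => (continuous_apply _).comp continuous_subtype_val)

lemma cyl_subset_cyl {S S' : Finset ℕ+} (hSS' : S ⊆ S') (hS : ↑S ⊆ B) (hS' : ↑S' ⊆ B)
    (h : Hspace B) : cyl B S' hS' h ⊆ cyl B S hS h :=
  fun _ H b hb => H b (hSS' hb)

lemma cyl_eq_of_mem {S : Finset ℕ+} {hS : ↑S ⊆ B} {h h' : Hspace B}
    (hh' : h' ∈ cyl B S hS h) :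
    cyl B S hS h' = cyl B S hS h := by
  ext h''
  exact forall₂_congr fun b hb => by rw [hh' b hb]

lemma exists_cyl_subset {U : Set (Hspace B)} (hU : IsOpen U) {h : Hspace B} (hh : h ∈ U) :
    ∃ (S : Finset ℕ+) (hS : ↑S ⊆ B), cyl B S hS h ⊆ U := by
  obtain ⟨V, hV, rfl⟩ := isOpen_induced_iff.mp hU
  obtain ⟨I, u, hIu, hsub⟩ := isOpen_pi_iff.mp hV (h : Gspace B) hh
  refine ⟨I.map (Function.Embedding.subtype _), ?_, fun h' hh' => hsub fun b hb => ?_⟩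
  · intro b hb
    obtain ⟨b', -, rfl⟩ := Finset.mem_map.mp hb
    exact b'.2
  · rw [hh' b (Finset.mem_map_of_mem _ hb)]
    exact (hIu b hb).2

lemma denseRange_deltaH (B : Set ℕ+) : DenseRange (deltaH B) := by
  refine (Topology.IsInducing.subtypeVal.dense_iff).mpr fun h => ?_
  rw [← range_comp]
  exact h.2

lemma deltaH_mem_window_iff (n : ℤ) : deltaH B n ∈ window B ↔ n ∈ FreeSet B :=
  ⟨fun H b hb hdvd => H ⟨b, hb⟩ ((ZMod.intCast_zmod_eq_zero_iff_dvd n b).mpr hdvd),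
    fun H b h0 => H b b.2 ((ZMod.intCast_zmod_eq_zero_iff_dvd n b).mp h0)⟩

lemma deltaH_mem_cyl_deltaH_iff {S : Finset ℕ+} (hS : ↑S ⊆ B) (m n : ℤ) :
    deltaH B m ∈ cyl B S hS (deltaH B n) ↔ (lcmS S : ℤ) ∣ m - n := by
  rw [Int.natCast_dvd, lcmS, Finset.lcm_dvd_iff]
  refine forall₂_congr fun b _ => ?_
  rw [← Int.natCast_dvd, ← dvd_neg, neg_sub]
  exact ZMod.intCast_eq_intCast_iff_dvd_sub m n b

lemma lcmS_pos (S : Finset ℕ+) : 0 < lcmS S :=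
  Nat.pos_of_ne_zero fun h => by
    obtain ⟨b, -, hb⟩ := Finset.lcm_eq_zero_iff.mp h
    exact b.ne_zero hb

lemma exists_add_mul_lcmS_mem_freeSet (hreg : window B ⊆ closure (interior (window B)))
    {n : ℤ} (hn : n ∈ FreeSet B) (S₀ : Finset ℕ+) (hS₀ : ↑S₀ ⊆ B) :
    ∃ (m : ℤ) (S : Finset ℕ+), ↑S ⊆ B ∧ (lcmS S₀ : ℤ) ∣ m - n ∧
      ∀ j : ℤ, m + j * lcmS S ∈ FreeSet B := by
  have hn_closure : deltaH B n ∈ closure (interior (window B)) :=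
    hreg ((deltaH_mem_window_iff n).mpr hn)
  obtain ⟨h₀, hh₀S₀, hh₀⟩ :=
    mem_closure_iff.mp hn_closure _ (isOpen_cyl S₀ hS₀ _) (mem_cyl_self _ _ _)
  obtain ⟨S₁, hS₁, hS₁W⟩ := exists_cyl_subset isOpen_interior hh₀
  have hS : ↑(S₀ ∪ S₁) ⊆ B := by
    rw [Finset.coe_union]
    exact union_subset hS₀ hS₁
  obtain ⟨m, hm⟩ :=
    (denseRange_deltaH B).exists_mem_open (isOpen_cyl _ hS h₀) ⟨h₀, mem_cyl_self _ _ _⟩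
  refine ⟨m, S₀ ∪ S₁, hS, ?_, fun j => ?_⟩
  · rw [← deltaH_mem_cyl_deltaH_iff hS₀, ← cyl_eq_of_mem hh₀S₀]
    exact cyl_subset_cyl Finset.subset_union_left hS₀ hS h₀ hm
  · rw [← deltaH_mem_window_iff]
    refine interior_subset (hS₁W (cyl_subset_cyl Finset.subset_union_right hS₁ hS h₀ ?_))
    rw [← cyl_eq_of_mem hm, deltaH_mem_cyl_deltaH_iff]
    simp

end Cylinder

section Arithmetic

lemma exists_finset_forall_dvd_lcmS (B : Set ℕ+) (D : Finset ℕ) :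
    ∃ S : Finset ℕ+, ↑S ⊆ B ∧
      ∀ d ∈ D, ∀ T : Finset ℕ+, ↑T ⊆ B → d ∣ lcmS T → d ∣ lcmS S := by
  classical
  induction D using Finset.induction_on with
  | empty => exact ⟨∅, by simp, by simp⟩
  | insert d D _ ih =>
    obtain ⟨S, hS, hSD⟩ := ih
    by_cases hd : ∃ T : Finset ℕ+, ↑T ⊆ B ∧ d ∣ lcmS T
    · obtain ⟨T, hT, hdT⟩ := hd
      refine ⟨S ∪ T, by simpa using union_subset hS hT, fun d' hd' T' hT' hdT' => ?_⟩
      rcases Finset.mem_insert.mp hd' with rfl | hd'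
      · exact hdT.trans (Finset.lcm_mono Finset.subset_union_right)
      · exact (hSD d' hd' T' hT' hdT').trans (Finset.lcm_mono Finset.subset_union_left)
    · refine ⟨S, hS, fun d' hd' T' hT' hdT' => ?_⟩
      rcases Finset.mem_insert.mp hd' with rfl | hd'
      · exact absurd ⟨T', hT', hdT'⟩ hd
      · exact hSD d' hd' T' hT' hdT'

variable {B : Set ℕ+}

lemma add_mul_mem_freeSet_of_gcd_dvd {m n L : ℤ} (hm : ∀ j : ℤ, m + j * L ∈ FreeSet B)
    (hmn : ∀ b ∈ B, (Int.gcd b L : ℤ) ∣ n → (Int.gcd b L : ℤ) ∣ m - n) (j : ℤ) :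
    n + j * L ∈ FreeSet B := by
  intro b hb hdvd
  have hgn : (Int.gcd b L : ℤ) ∣ n := by
    have hg_dvd : (Int.gcd b L : ℤ) ∣ n + j * L :=
      (Int.gcd_dvd_left (a := b) (b := L)).trans hdvd
    simpa using hg_dvd.sub ((Int.gcd_dvd_right (a := b) (b := L)).mul_left j)
  obtain ⟨x, y, hxy⟩ := (gcd_dvd_iff_exists (b : ℤ) L).mp
    (by simpa [Int.coe_gcd] using hgn.add (hmn b hb hgn))
  exact hm (-y) b hb ⟨x, by rw [hxy]; ring⟩

lemma exists_add_mul_mem_freeSet (hreg : window B ⊆ closure (interior (window B)))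
    (hne : B.Nonempty) {n : ℤ} (hn : n ∈ FreeSet B) :
    ∃ L : ℤ, 0 < L ∧ ∀ j : ℤ, n + j * L ∈ FreeSet B := by
  obtain ⟨b₀, hb₀⟩ := hne
  have hn0 : n ≠ 0 := fun h => hn b₀ hb₀ (h ▸ dvd_zero _)
  obtain ⟨S₀, hS₀, hS₀_dvd⟩ := exists_finset_forall_dvd_lcmS B n.natAbs.divisors
  obtain ⟨m, S, hS, hmn, hm⟩ := exists_add_mul_lcmS_mem_freeSet hreg hn S₀ hS₀
  refine ⟨lcmS S, by exact_mod_cast lcmS_pos S, add_mul_mem_freeSet_of_gcd_dvd hm ?_⟩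
  intro b _ hgn
  rw [Int.gcd_natCast_natCast] at hgn ⊢
  have hdiv : Nat.gcd b (lcmS S) ∈ n.natAbs.divisors :=
    Nat.mem_divisors.mpr ⟨Int.natCast_dvd.mp hgn, Int.natAbs_ne_zero.mpr hn0⟩
  exact (Int.natCast_dvd_natCast.mpr (hS₀_dvd _ hdiv S hS (Nat.gcd_dvd_right _ _))).trans hmn

end Arithmetic

section Eta

variable {B : Set ℕ+}

lemma eta_eq_true_iff (n : ℤ) : eta B n = true ↔ n ∈ FreeSet B := by
  simp [eta]

lemma isToeplitz_eta (hreg : window B ⊆ closure (interior (window B))) (hne : B.Nonempty) :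
    IsToeplitz (eta B) := by
  intro n
  by_cases hn : n ∈ FreeSet B
  · obtain ⟨L, hL_pos, hL⟩ := exists_add_mul_mem_freeSet hreg hne hn
    refine ⟨L, hL_pos, fun k => ?_⟩
    rw [Bool.eq_iff_iff, eta_eq_true_iff, eta_eq_true_iff]
    exact iff_of_true (hL k) hn
  · obtain ⟨b, hb, hbn⟩ : ∃ b ∈ B, ((b : ℕ) : ℤ) ∣ n := by
      simpa [FreeSet] using hn
    refine ⟨b, by exact_mod_cast b.pos, fun k => ?_⟩
    rw [Bool.eq_iff_iff, eta_eq_true_iff, eta_eq_true_iff]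
    exact iff_of_false (fun h => h b hb (hbn.add (dvd_mul_left _ k))) hn

lemma zero_notMem_freeSet (hne : B.Nonempty) : (0 : ℤ) ∉ FreeSet B :=
  fun h => h _ hne.some_mem (dvd_zero _)

lemma one_mem_freeSet (hprim : Primitive B) (hB : B.Nontrivial) : (1 : ℤ) ∈ FreeSet B := by
  intro b hb hdvd
  obtain ⟨b', hb', hne⟩ := hB.exists_ne b
  have hb1 : b = 1 := PNat.coe_eq_one_iff.mp (Nat.dvd_one.mp (by exact_mod_cast hdvd))
  exact hne (hprim b hb b' hb' (hb1 ▸ one_dvd _)).symm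

end Eta

/-- If `B` is an infinite primitive set of positive integers and the window `W`
is topologically regular, then the subshift `(X_η, σ)` is minimal and `X_η` has more than
one element. -/
theorem statement6 (B : Set ℕ+) (hB : B.Infinite) (hprim : Primitive B)
    (hreg : window B = closure (interior (window B))) :
    (∀ x ∈ Xeta B, closure {y | ∃ k : ℤ, y = shift k x} = Xeta B) ∧
      (Xeta B).Nontrivial := by
  have hη : IsToeplitz (eta B) := isToeplitz_eta hreg.le hB.nonempty
  refine ⟨fun x hx => hη.closure_shiftOrbit_eq hx,
    eta B, subset_closure ⟨0, ?_⟩, shift 1 (eta B), subset_closure ⟨1, rfl⟩, fun h => ?_⟩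
  · funext n
    simp [shift]
  · have h01 : eta B 0 = eta B 1 := congrFun h 0
    rw [Bool.eq_iff_iff, eta_eq_true_iff, eta_eq_true_iff] at h01
    exact zero_notMem_freeSet hB.nonempty (h01.mpr (one_mem_freeSet hprim hB.nontrivial))

end BFree
end

section
/- Let B be an infinite primitive set of positive integers, S ⊆ B finite, and n ∈ ℤ. Then U_S(Δ(n)) ⊆ W if and only if n ∈ F_{A_S}, i.e., no element of A_S divides n. -/
open Set MeasureTheory Filter Topology

namespace BFree

/-!
A point `h ∈ U_S(Δ(n))` with `h_b = 0` can be replaced, by density of `Δ(ℤ)` in `H`, with some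
`Δ(x)` having the same coordinates at `b` and on `S`; so `U_S(Δ(n))` leaves `W` at the coordinate
`b` exactly when some integer `x` satisfies `b ∣ x` and `x ≡ n (mod lcm S)`. By Bézout such an `x`
exists iff `gcd(b, lcm S) ∣ n`.
-/

theorem gcd_dvd_iff_exists_dvd_and_dvd_sub {R : Type*} [CommRing R] [IsBezout R] [IsDomain R]
    [GCDMonoid R] {a b z : R} : gcd a b ∣ z ↔ ∃ x, a ∣ x ∧ b ∣ x - z := by
  constructor
  · intro hz
    obtain ⟨x, y, rfl⟩ := (gcd_dvd_iff_exists a b).1 hz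
    exact ⟨a * x, dvd_mul_right a x, ⟨-y, by ring⟩⟩
  · rintro ⟨x, hax, hbx⟩
    simpa using dvd_sub ((gcd_dvd_left a b).trans hax) ((gcd_dvd_right a b).trans hbx)

theorem natCast_lcmS_dvd_iff (S : Finset ℕ+) (k : ℤ) :
    (lcmS S : ℤ) ∣ k ↔ ∀ s ∈ S, ((s : ℕ) : ℤ) ∣ k := by
  simp only [Int.natCast_dvd, lcmS, Finset.lcm_dvd_iff]

section

variable {B : Set ℕ+}

theorem deltaH_apply (n : ℤ) (b : B) : (deltaH B n : Gspace B) b = (n : ZMod (b : ℕ+)) := rfl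

theorem deltaH_apply_eq_zero_iff (n : ℤ) (b : B) :
    (deltaH B n : Gspace B) b = 0 ↔ (((b : ℕ+) : ℕ) : ℤ) ∣ n :=
  ZMod.intCast_zmod_eq_zero_iff_dvd n _

theorem deltaH_mem_cyl_iff (S : Finset ℕ+) (hS : ↑S ⊆ B) (m n : ℤ) :
    deltaH B m ∈ cyl B S hS (deltaH B n) ↔ (lcmS S : ℤ) ∣ m - n := by
  rw [natCast_lcmS_dvd_iff]
  refine forall₂_congr fun s _ => ?_
  rw [deltaH_apply, deltaH_apply, ZMod.intCast_eq_intCast_iff_dvd_sub, ← dvd_neg, neg_sub]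

-- Sets fixing finitely many coordinates are open, and `Δ(ℤ)` is dense in `H`.
theorem exists_deltaH_eqOn (h : Hspace B) {T : Set B} (hT : T.Finite) :
    ∃ m : ℤ, ∀ t ∈ T, (deltaH B m : Gspace B) t = (h : Gspace B) t := by
  have hopen : IsOpen (T.pi fun t => {(h : Gspace B) t}) :=
    isOpen_set_pi hT fun _ _ => isOpen_discrete _
  obtain ⟨_, hgT, m, rfl⟩ := mem_closure_iff.mp h.2 _ hopen fun _ _ => rfl
  exact ⟨m, hgT⟩

theorem exists_mem_cyl_apply_eq_zero_iff (S : Finset ℕ+) (hS : ↑S ⊆ B) (n : ℤ) (b : B) :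
    (∃ h ∈ cyl B S hS (deltaH B n), (h : Gspace B) b = 0) ↔
      ((Nat.gcd (b : ℕ+) (lcmS S) : ℕ) : ℤ) ∣ n := by
  rw [← Int.gcd_natCast_natCast, Int.coe_gcd, gcd_dvd_iff_exists_dvd_and_dvd_sub]
  constructor
  · rintro ⟨h, hcyl, hb⟩
    have hT : (insert b (Subtype.val ⁻¹' (S : Set ℕ+))).Finite :=
      (S.finite_toSet.preimage Subtype.val_injective.injOn).insert b
    obtain ⟨m, hm⟩ := exists_deltaH_eqOn h hT
    refine ⟨m, (deltaH_apply_eq_zero_iff m b).1 (hb ▸ hm b (Set.mem_insert b _)),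
      (deltaH_mem_cyl_iff S hS m n).1 fun s hs => ?_⟩
    exact (hm ⟨s, hS hs⟩ (Set.mem_insert_of_mem b hs)).trans (hcyl s hs)
  · rintro ⟨x, hbx, hLx⟩
    exact ⟨deltaH B x, (deltaH_mem_cyl_iff S hS x n).2 hLx, (deltaH_apply_eq_zero_iff x b).2 hbx⟩

end

theorem statement15_general (B : Set ℕ+)
    (S : Finset ℕ+) (hS : ↑S ⊆ B) (n : ℤ) :
    cyl B S hS (deltaH B n) ⊆ window B ↔ ∀ m ∈ ASet B S, ¬ (m : ℤ) ∣ n := by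
  constructor
  · rintro hsub _ ⟨b, hb, rfl⟩ hdvd
    obtain ⟨h, hcyl, h0⟩ := (exists_mem_cyl_apply_eq_zero_iff S hS n ⟨b, hb⟩).2 hdvd
    exact hsub hcyl ⟨b, hb⟩ h0
  · intro hA h hcyl b h0
    exact hA _ ⟨b, b.2, rfl⟩ ((exists_mem_cyl_apply_eq_zero_iff S hS n b).1 ⟨h, hcyl, h0⟩)

/-- For an infinite primitive `B`, finite `S ⊆ B` and `n ∈ ℤ`:
`U_S(Δ(n)) ⊆ W` iff no element of `A_S` divides `n`. -/
theorem statement15 (B : Set ℕ+) (hB : B.Infinite) (hprim : Primitive B)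
    (S : Finset ℕ+) (hS : ↑S ⊆ B) (n : ℤ) :
    cyl B S hS (deltaH B n) ⊆ window B ↔ ∀ m ∈ ASet B S, ¬ (m : ℤ) ∣ n :=
  statement15_general B S hS n

end BFree
end
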